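/- arXiv:2509.12272 — 5 statements merged into one kernel-verified Lean document; each statement's English description precedes it below -/
import Mathlib

section
/- Let μ > 0 and let u : ℝ → ℝ be twice differentiable with u''(t) = −u(t)·(u(t)² − μ) for all t. Suppose the initial energy is negative: ½·u'(0)² + ¼·u(0)⁴ − (μ/2)·u(0)² < 0. Then u(t) ≠ 0 for all t ∈ ℝ, and the sign of u is constant: if u(0) > 0 then u(t) > 0 for all t, and if u(0) < 0 then u(t) < 0 for all t. In particular, negative initial energy forces the oscillation to remain confined to one side (type i oscillation). -/
/-!
The energy `½ u'² + ¼ u⁴ − (μ/2) u²` is conserved along solutions, and at any zero of `u`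
it equals `½ u'² ≥ 0`. A solution of negative energy therefore never vanishes, and by the
intermediate value theorem it keeps the sign of `u 0`.
-/

noncomputable def kleinGordonEnergy (μ : ℝ) (u : ℝ → ℝ) (t : ℝ) : ℝ :=
  (1 / 2) * (deriv u t) ^ 2 + (1 / 4) * (u t) ^ 4 - (μ / 2) * (u t) ^ 2

theorem kleinGordonEnergy_conserved {μ : ℝ} {u : ℝ → ℝ}
    (hu : Differentiable ℝ u) (hu' : Differentiable ℝ (deriv u))
    (hode : ∀ t, deriv (deriv u) t = -u t * (u t ^ 2 - μ)) (t : ℝ) :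
    kleinGordonEnergy μ u t = kleinGordonEnergy μ u 0 := by
  have hderiv : ∀ s, HasDerivAt (kleinGordonEnergy μ u) 0 s := by
    intro s
    have hus := (hu s).hasDerivAt
    have h : HasDerivAt (kleinGordonEnergy μ u)
        ((1 / 2) * (2 * deriv u s ^ 1 * deriv (deriv u) s) + (1 / 4) * (4 * u s ^ 3 * deriv u s)
          - (μ / 2) * (2 * u s ^ 1 * deriv u s)) s :=
      ((((hu' s).hasDerivAt.pow 2).const_mul (1 / 2 : ℝ)).add
        ((hus.pow 4).const_mul (1 / 4 : ℝ))).sub ((hus.pow 2).const_mul (μ / 2))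
    convert h using 1
    rw [hode s]
    ring
  exact is_const_of_deriv_eq_zero (fun s ↦ (hderiv s).differentiableAt)
    (fun s ↦ (hderiv s).deriv) t 0

theorem kleinGordonEnergy_nonneg_of_eq_zero {μ : ℝ} {u : ℝ → ℝ} {t : ℝ} (ht : u t = 0) :
    0 ≤ kleinGordonEnergy μ u t := by
  rw [kleinGordonEnergy, ht]
  nlinarith [sq_nonneg (deriv u t)]

theorem Continuous.lt_of_lt_of_forall_ne {X α : Type*} [TopologicalSpace X]
    [PreconnectedSpace X] [LinearOrder α] [TopologicalSpace α] [OrderClosedTopology α]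
    {f : X → α} {c : α} (hf : Continuous f) (hne : ∀ x, f x ≠ c) {a : X} (ha : c < f a)
    (b : X) : c < f b := by
  by_contra! hb
  obtain ⟨x, hx⟩ := mem_range_of_exists_le_of_exists_ge hf ⟨b, hb⟩ ⟨a, ha.le⟩
  exact hne x hx

theorem stmt_7_general (μ : ℝ) (u : ℝ → ℝ)
    (hu : Differentiable ℝ u) (hu' : Differentiable ℝ (deriv u))
    (hode : ∀ t : ℝ, deriv (deriv u) t = -u t * (u t ^ 2 - μ))
    (hE : (1 / 2) * (deriv u 0) ^ 2 + (1 / 4) * (u 0) ^ 4 - (μ / 2) * (u 0) ^ 2 < 0) :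
    (∀ t : ℝ, u t ≠ 0) ∧
    (0 < u 0 → ∀ t : ℝ, 0 < u t) ∧
    (u 0 < 0 → ∀ t : ℝ, u t < 0) := by
  have hne : ∀ t, u t ≠ 0 := fun t ht ↦
    (kleinGordonEnergy_nonneg_of_eq_zero ht).not_gt <|
      (kleinGordonEnergy_conserved hu hu' hode t).trans_lt hE
  refine ⟨hne, fun h0 ↦ hu.continuous.lt_of_lt_of_forall_ne hne h0, fun h0 t ↦ ?_⟩
  have hneg : ∀ t, -u t ≠ 0 := fun t ↦ neg_ne_zero.mpr (hne t)
  simpa using hu.continuous.neg.lt_of_lt_of_forall_ne hneg (neg_pos.mpr h0) t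

/-- Negative initial energy forces sign confinement (type i oscillation): if
`u'' = −u(u² − μ)` with `μ > 0` and the initial energy
`½·u'(0)² + ¼·u(0)⁴ − (μ/2)·u(0)²` is negative, then `u` never vanishes and
keeps the sign of `u(0)`. -/
theorem stmt_7 (μ : ℝ) (hμ : 0 < μ) (u : ℝ → ℝ)
    (hu : Differentiable ℝ u) (hu' : Differentiable ℝ (deriv u))
    (hode : ∀ t : ℝ, deriv (deriv u) t = -u t * (u t ^ 2 - μ))
    (hE : (1 / 2) * (deriv u 0) ^ 2 + (1 / 4) * (u 0) ^ 4 - (μ / 2) * (u 0) ^ 2 < 0) :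
    (∀ t : ℝ, u t ≠ 0) ∧
    (0 < u 0 → ∀ t : ℝ, 0 < u t) ∧
    (u 0 < 0 → ∀ t : ℝ, u t < 0) :=
  stmt_7_general μ u hu hu' hode hE
end

section
/- Let μ > 0 and 0 ≤ A < (√2 − 1)·√μ. Let u : ℝ → ℝ be twice differentiable with u''(t) = −u(t)·(u(t)² − μ), u(0) = A + √μ, and u'(0) = 0. Then 0 < u(t) ≤ A + √μ for all t ∈ ℝ. In particular, the solution stays forever on the positive side, around the Lyapunov-stable steady state √μ (type i confined oscillation), and no transition to the other stable state −√μ occurs. -/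
/-!
Along a solution the energy `½ u'² + V(u)`, with `V(v) = v⁴/4 − μ v²/2`, is conserved, and since
`u'(0) = 0` this gives `V(u t) ≤ V(a)` for `a = A + √μ`. The threshold on `A` is exactly
`a² < 2μ`, i.e. `V(a) < 0 = V(0)`, so `u` never vanishes and stays positive. On `v² ≥ μ` the
potential is increasing in `v²`, and `a² ≥ μ`, so `V(u t) ≤ V(a)` also forces `u t ≤ a`.
-/

open Real

theorem energy_eq_of_deriv_deriv_eq {u V V' : ℝ → ℝ} (hu : Differentiable ℝ u)
    (hu' : Differentiable ℝ (deriv u)) (hV : ∀ x, HasDerivAt V (V' x) x)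
    (hode : ∀ t, deriv (deriv u) t = -V' (u t)) (t s : ℝ) :
    deriv u t ^ 2 / 2 + V (u t) = deriv u s ^ 2 / 2 + V (u s) := by
  have hE : ∀ t, HasDerivAt (fun t ↦ deriv u t ^ 2 / 2 + V (u t)) 0 t := by
    intro t
    have h : HasDerivAt (fun t ↦ deriv u t ^ 2 / 2 + V (u t))
        (2 * deriv u t ^ 1 * deriv (deriv u) t / 2 + V' (u t) * deriv u t) t :=
      (((hu' t).hasDerivAt.pow 2).div_const 2).add ((hV (u t)).comp t (hu t).hasDerivAt)
    convert h using 1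
    rw [hode t]
    ring
  exact is_const_of_deriv_eq_zero (fun t ↦ (hE t).differentiableAt) (fun t ↦ (hE t).deriv) t s

theorem Continuous.pos_of_forall_ne_zero {f : ℝ → ℝ} (hf : Continuous f) (hne : ∀ x, f x ≠ 0)
    {x₀ : ℝ} (hx₀ : 0 < f x₀) (x : ℝ) : 0 < f x := by
  by_contra! hle
  have hzero : (0 : ℝ) ∈ Set.uIcc (f x) (f x₀) := Set.mem_uIcc.mpr (Or.inl ⟨hle, hx₀.le⟩)
  obtain ⟨c, -, hc⟩ := intermediate_value_uIcc hf.continuousOn hzero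
  exact hne c hc

/-- The potential of the reduced cubic Klein–Gordon equation `u'' = -u (u² - μ)`. -/
noncomputable def kgPotential (μ v : ℝ) : ℝ := v ^ 4 / 4 - μ * v ^ 2 / 2

theorem hasDerivAt_kgPotential (μ v : ℝ) :
    HasDerivAt (kgPotential μ) (v * (v ^ 2 - μ)) v := by
  have h := ((hasDerivAt_pow 4 v).div_const 4).fun_sub
    (((hasDerivAt_pow 2 v).const_mul μ).div_const 2)
  exact h.congr_deriv (by norm_num; ring)

theorem kgPotential_zero (μ : ℝ) : kgPotential μ 0 = 0 := by
  simp [kgPotential]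

theorem kgPotential_neg {μ a : ℝ} (ha : a ≠ 0) (ha2 : a ^ 2 < 2 * μ) : kgPotential μ a < 0 := by
  have hpos : 0 < a ^ 2 := by positivity
  have h : kgPotential μ a = a ^ 2 * (a ^ 2 - 2 * μ) / 4 := by
    unfold kgPotential
    ring
  rw [h]
  nlinarith

theorem sq_le_of_kgPotential_le {μ a v : ℝ} (ha : μ ≤ a ^ 2)
    (h : kgPotential μ v ≤ kgPotential μ a) : v ^ 2 ≤ a ^ 2 := by
  have hfac : kgPotential μ v - kgPotential μ a =
      (v ^ 2 - a ^ 2) * (v ^ 2 + a ^ 2 - 2 * μ) / 4 := by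
    unfold kgPotential
    ring
  by_contra! hlt
  have : 0 < (v ^ 2 - a ^ 2) * (v ^ 2 + a ^ 2 - 2 * μ) := mul_pos (by linarith) (by linarith)
  linarith

theorem sq_lt_two_mul_of_lt_threshold {μ A : ℝ} (hA : 0 ≤ A)
    (hAlt : A < (√2 - 1) * √μ) : (A + √μ) ^ 2 < 2 * μ := by
  have hlt : A + √μ < √(2 * μ) := by
    rw [sqrt_mul zero_le_two]
    linarith
  exact (lt_sqrt (by positivity)).mp hlt

/-- Below the threshold amplitude the oscillation is confined (type i): if
`μ > 0`, `0 ≤ A < (√2 − 1)·√μ`, and `u'' = −u(u² − μ)` with `u(0) = A + √μ`,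
`u'(0) = 0`, then `0 < u(t) ≤ A + √μ` for all `t`. -/
theorem stmt_9 (μ A : ℝ) (hμ : 0 < μ) (hA : 0 ≤ A)
    (hAlt : A < (Real.sqrt 2 - 1) * Real.sqrt μ) (u : ℝ → ℝ)
    (hu : Differentiable ℝ u) (hu' : Differentiable ℝ (deriv u))
    (hode : ∀ t : ℝ, deriv (deriv u) t = -u t * (u t ^ 2 - μ))
    (h0 : u 0 = A + Real.sqrt μ) (h0' : deriv u 0 = 0) :
    ∀ t : ℝ, 0 < u t ∧ u t ≤ A + Real.sqrt μ := by
  set a := A + √μ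
  have ha : 0 < a := by positivity
  have hVle : ∀ t, kgPotential μ (u t) ≤ kgPotential μ a := by
    intro t
    have h := energy_eq_of_deriv_deriv_eq hu hu' (hasDerivAt_kgPotential μ)
      (fun t ↦ by rw [hode t]; ring) t 0
    rw [h0, h0'] at h
    nlinarith [sq_nonneg (deriv u t)]
  have hVa : kgPotential μ a < 0 := kgPotential_neg ha.ne' (sq_lt_two_mul_of_lt_threshold hA hAlt)
  have hne : ∀ t, u t ≠ 0 := fun t h ↦ by
    have := hVle t
    rw [h, kgPotential_zero] at this
    linarith
  have hpos := hu.continuous.pos_of_forall_ne_zero hne (h0 ▸ ha)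
  have hμa : μ ≤ a ^ 2 := by
    have : μ = √μ ^ 2 := (sq_sqrt hμ.le).symm
    nlinarith [sqrt_nonneg μ]
  exact fun t ↦ ⟨hpos t, (sq_le_sq₀ (hpos t).le ha.le).mp (sq_le_of_kgPotential_le hμa (hVle t))⟩
end

section
/- Let μ > 0. The equilibrium u ≡ 0 of the reduced ODE is not Lyapunov stable: there exists ε > 0 (for instance ε = √μ/2) such that for every δ > 0 there is a twice differentiable solution u : ℝ → ℝ of u''(t) = −u(t)·(u(t)² − μ) with |u(0)| < δ and u'(0) = 0, but with |u(t)| ≥ √μ/2 for some t > 0. -/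
open Real Filter intervalIntegral

set_option maxHeartbeats 1000000

/-- The equilibrium `u ≡ 0` of the reduced cubic Klein–Gordon ODE
`u'' = −u(u² − μ)`, `μ > 0`, is not Lyapunov stable: with `ε = √μ/2`, for every
`δ > 0` there is a twice differentiable solution with `|u(0)| < δ`, `u'(0) = 0`,
but `|u(t)| ≥ √μ/2` for some `t > 0`. -/
theorem stmt_13 (μ : ℝ) (hμ : 0 < μ) :
    ∃ ε : ℝ, ε = Real.sqrt μ / 2 ∧ 0 < ε ∧
      ∀ δ > 0, ∃ u : ℝ → ℝ,
        Differentiable ℝ u ∧ Differentiable ℝ (deriv u) ∧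
        (∀ t : ℝ, deriv (deriv u) t = -u t * (u t ^ 2 - μ)) ∧
        |u 0| < δ ∧ deriv u 0 = 0 ∧
        ∃ t : ℝ, 0 < t ∧ Real.sqrt μ / 2 ≤ |u t| := by
  refine ⟨Real.sqrt μ / 2, rfl, by positivity, ?_⟩
  intro δ hδ
  -- the small initial amplitude
  obtain ⟨a, ha_def⟩ : ∃ a : ℝ, a = min (δ / 2) (Real.sqrt μ / 2) := ⟨_, rfl⟩
  have ha : 0 < a := ha_def ▸ lt_min (by linarith) (by positivity)
  have ha2 : a ^ 2 ≤ μ / 4 := by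
    have h1 : a ≤ Real.sqrt μ / 2 := ha_def ▸ min_le_right _ _
    have h2 : (Real.sqrt μ / 2) ^ 2 = μ / 4 := by
      rw [div_pow, Real.sq_sqrt hμ.le]; norm_num
    nlinarith [ha.le]
  have haδ : a < δ := lt_of_le_of_lt (ha_def ▸ min_le_left _ _) (by linarith)
  obtain ⟨b2, hb2_def⟩ : ∃ b : ℝ, b = 2 * μ - a ^ 2 := ⟨_, rfl⟩
  obtain ⟨c, hc_def⟩ : ∃ c : ℝ, c = 2 * μ - 2 * a ^ 2 := ⟨_, rfl⟩
  have hb2 : 0 < b2 := by rw [hb2_def]; nlinarith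
  have hc : 0 < c := by rw [hc_def]; nlinarith
  have hbc : b2 - c = a ^ 2 := by rw [hb2_def, hc_def]; ring
  have hcb : c = 2 * b2 - 2 * μ := by rw [hb2_def, hc_def]; ring
  -- the "angular speed" function g
  obtain ⟨g, hg_def⟩ : ∃ g : ℝ → ℝ,
      g = fun θ => Real.sqrt ((b2 - c * Real.sin θ ^ 2) / 2) := ⟨_, rfl⟩
  have hlow : ∀ θ : ℝ, a ^ 2 ≤ b2 - c * Real.sin θ ^ 2 := by
    intro θ
    have hs : Real.sin θ ^ 2 ≤ 1 := sin_sq_le_one θ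
    nlinarith
  have hupp : ∀ θ : ℝ, b2 - c * Real.sin θ ^ 2 ≤ b2 := by
    intro θ
    have := sq_nonneg (Real.sin θ)
    nlinarith
  have hgval : ∀ θ : ℝ, g θ = Real.sqrt ((b2 - c * Real.sin θ ^ 2) / 2) := by
    intro θ; rw [hg_def]
  have hgpos : ∀ θ : ℝ, 0 < g θ := by
    intro θ
    rw [hgval θ]
    apply Real.sqrt_pos.mpr
    have := hlow θ
    nlinarith
  have hgub : ∀ θ : ℝ, g θ ≤ Real.sqrt (b2 / 2) := by
    intro θ
    rw [hgval θ]
    have hineq : (b2 - c * Real.sin θ ^ 2) / 2 ≤ b2 / 2 := by linarith [hupp θ]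
    exact Real.sqrt_le_sqrt hineq
  have hgcont : Continuous g := by
    rw [hg_def]
    exact Continuous.sqrt ((continuous_const.sub
      (continuous_const.mul (Real.continuous_sin.pow 2))).div_const 2)
  have hginv_cont : Continuous fun θ => (g θ)⁻¹ :=
    hgcont.inv₀ fun θ => (hgpos θ).ne'
  -- the inverse amplitude function G
  obtain ⟨G, hG_def⟩ : ∃ G : ℝ → ℝ,
      G = fun ψ => ∫ θ in (π / 2)..ψ, (g θ)⁻¹ := ⟨_, rfl⟩
  have hGval : ∀ ψ : ℝ, G ψ = ∫ θ in (π / 2)..ψ, (g θ)⁻¹ := by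
    intro ψ; rw [hG_def]
  have hGint : ∀ x y : ℝ, IntervalIntegrable (fun θ => (g θ)⁻¹) MeasureTheory.volume x y :=
    fun x y => hginv_cont.intervalIntegrable x y
  have hG' : ∀ ψ : ℝ, HasDerivAt G ((g ψ)⁻¹) ψ := by
    intro ψ
    rw [hG_def]
    exact intervalIntegral.integral_hasDerivAt_right (hGint _ _)
      (hginv_cont.stronglyMeasurableAtFilter _ _) hginv_cont.continuousAt
  have hGmono : StrictMono G :=
    strictMono_of_deriv_pos fun ψ => by
      rw [(hG' ψ).deriv]; exact inv_pos.mpr (hgpos ψ)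
  have hGcont : Continuous G := by
    have : Differentiable ℝ G := fun ψ => (hG' ψ).differentiableAt
    exact this.continuous
  -- linear lower bounds on the derivative give surjectivity
  obtain ⟨L, hL_def⟩ : ∃ L : ℝ, L = (Real.sqrt (b2 / 2))⁻¹ := ⟨_, rfl⟩
  have hL : 0 < L := by
    rw [hL_def]
    apply inv_pos.mpr
    apply Real.sqrt_pos.mpr
    linarith
  have hginvL : ∀ θ : ℝ, L ≤ (g θ)⁻¹ := fun θ =>
    hL_def ▸ inv_anti₀ (hgpos θ) (hgub θ)
  have hGtop : Tendsto G atTop atTop := by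
    apply tendsto_atTop_mono' _ (_ : ∀ᶠ x in atTop, L * (x - π / 2) ≤ G x)
      (by
        have h0 : Tendsto (fun x : ℝ => x - π / 2) atTop atTop :=
          tendsto_atTop_add_const_right atTop (-(π / 2)) tendsto_id
        exact (tendsto_const_mul_atTop_of_pos hL).mpr h0)
    filter_upwards [eventually_ge_atTop (π / 2)] with x hx
    rw [hGval x]
    calc L * (x - π / 2) = ∫ _ in (π / 2)..x, L := by
          rw [intervalIntegral.integral_const, smul_eq_mul]; ring
      _ ≤ ∫ θ in (π / 2)..x, (g θ)⁻¹ := intervalIntegral.integral_mono_on hx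
          (intervalIntegrable_const) (hGint _ _) fun θ _ => hginvL θ
  have hGbot : Tendsto G atBot atBot := by
    apply tendsto_atBot_mono' _ (_ : ∀ᶠ x in atBot, G x ≤ L * (x - π / 2))
      (by
        have h0 : Tendsto (fun x : ℝ => x - π / 2) atBot atBot :=
          tendsto_atBot_add_const_right atBot (-(π / 2)) tendsto_id
        exact (tendsto_const_mul_atBot_of_pos hL).mpr h0)
    filter_upwards [eventually_le_atBot (π / 2)] with x hx
    have h1 : L * (π / 2 - x) ≤ -G x := by
      have h2 : -G x = ∫ θ in x..(π / 2), (g θ)⁻¹ := by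
        rw [hGval x, intervalIntegral.integral_symm x (π / 2), neg_neg]
      rw [h2]
      calc L * (π / 2 - x) = ∫ _ in x..(π / 2), L := by
            rw [intervalIntegral.integral_const, smul_eq_mul]; ring
        _ ≤ _ := intervalIntegral.integral_mono_on hx
            (intervalIntegrable_const) (hGint _ _) fun θ _ => hginvL θ
    linarith
  have hGsurj : Function.Surjective G := hGcont.surjective hGtop hGbot
  -- the amplitude function φ (inverse of G)
  obtain ⟨E, hE_def⟩ : ∃ E : ℝ ≃o ℝ,
      E = StrictMono.orderIsoOfSurjective G hGmono hGsurj := ⟨_, rfl⟩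
  obtain ⟨φ, hφ_def⟩ : ∃ φ : ℝ → ℝ, φ = fun y => E.symm y := ⟨_, rfl⟩
  have hEG : ∀ x : ℝ, E x = G x := fun x => by
    rw [hE_def, StrictMono.coe_orderIsoOfSurjective]
  have hGφ : ∀ y : ℝ, G (φ y) = y := fun y => by
    rw [hφ_def, ← hEG]; exact E.apply_symm_apply y
  have hφG : ∀ x : ℝ, φ (G x) = x := fun x => by
    rw [hφ_def, ← hEG]; exact E.symm_apply_apply x
  have hφcont : Continuous φ := by rw [hφ_def]; exact E.symm.continuous
  have hφ' : ∀ t : ℝ, HasDerivAt φ (g (φ t)) t := by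
    intro t
    have h := HasDerivAt.of_local_left_inverse (hφcont.continuousAt)
      (hG' (φ t)) (inv_ne_zero (hgpos (φ t)).ne') (Eventually.of_forall hGφ)
    rwa [inv_inv] at h
  have hφ0 : φ 0 = π / 2 := by
    have h0 : G (π / 2) = 0 := by rw [hGval]; exact intervalIntegral.integral_same
    rw [← h0, hφG]
  -- the solution u
  obtain ⟨u, hu_def⟩ : ∃ u : ℝ → ℝ,
      u = fun t => Real.sqrt (b2 - c * Real.sin (φ t) ^ 2) := ⟨_, rfl⟩
  obtain ⟨du, hdu_def⟩ : ∃ du : ℝ → ℝ,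
      du = fun t => -(c * (Real.sin (φ t) * Real.cos (φ t))) / Real.sqrt 2 := ⟨_, rfl⟩
  have hsqrt2 : (0:ℝ) < Real.sqrt 2 := by positivity
  have hval : ∀ x : ℝ, Real.sqrt (b2 - c * Real.sin x ^ 2) = Real.sqrt 2 * g x := by
    intro x
    rw [hgval x, ← Real.sqrt_mul (by norm_num : (0:ℝ) ≤ 2)]
    congr 1
    ring
  have huval : ∀ t : ℝ, u t = Real.sqrt 2 * g (φ t) := by
    intro t; rw [hu_def]; exact hval (φ t)
  have hsin' : ∀ t : ℝ, HasDerivAt (fun t => Real.sin (φ t))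
      (Real.cos (φ t) * g (φ t)) t := fun t =>
    (Real.hasDerivAt_sin (φ t)).comp t (hφ' t)
  have hcos' : ∀ t : ℝ, HasDerivAt (fun t => Real.cos (φ t))
      (-Real.sin (φ t) * g (φ t)) t := fun t =>
    (Real.hasDerivAt_cos (φ t)).comp t (hφ' t)
  have hu' : ∀ t : ℝ, HasDerivAt u (du t) t := by
    intro t
    rw [hu_def]
    have hinner : HasDerivAt (fun t : ℝ => b2 - c * Real.sin (φ t) ^ 2)
        (-(c * (2 * Real.sin (φ t) ^ 1 * (Real.cos (φ t) * g (φ t))))) t :=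
      (((hsin' t).pow 2).const_mul c).const_sub b2
    have hne : b2 - c * Real.sin (φ t) ^ 2 ≠ 0 := by
      have := hlow (φ t); nlinarith
    have h := hinner.sqrt hne
    convert h using 1
    rw [hdu_def, hval (φ t)]
    have hgne : g (φ t) ≠ 0 := (hgpos (φ t)).ne'
    field_simp
  have hDu : Differentiable ℝ u := fun t => (hu' t).differentiableAt
  have hderiv_u : deriv u = du := funext fun t => (hu' t).deriv
  have hdu' : ∀ t : ℝ, HasDerivAt du
      (-(c * (Real.cos (φ t) * g (φ t) * Real.cos (φ t) +
        Real.sin (φ t) * (-Real.sin (φ t) * g (φ t)))) / Real.sqrt 2) t := by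
    intro t
    rw [hdu_def]
    exact (((hsin' t).mul (hcos' t)).const_mul c).neg.div_const (Real.sqrt 2)
  have hDdu : Differentiable ℝ du := fun t => (hdu' t).differentiableAt
  refine ⟨u, hDu, by rw [hderiv_u]; exact hDdu, ?_, ?_, ?_, ?_⟩
  · -- the ODE
    intro t
    rw [hderiv_u, (hdu' t).deriv]
    have hC2 : Real.cos (φ t) ^ 2 = 1 - Real.sin (φ t) ^ 2 := by
      have := Real.sin_sq_add_cos_sq (φ t)
      linarith
    have h2G : 2 * g (φ t) ^ 2 = b2 - c * Real.sin (φ t) ^ 2 := by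
      rw [hgval (φ t),
        Real.sq_sqrt (by nlinarith [hlow (φ t)] : (0:ℝ) ≤ (b2 - c * Real.sin (φ t) ^ 2) / 2)]
      ring
    have hs2 : Real.sqrt 2 ^ 2 = 2 := Real.sq_sqrt (by norm_num)
    rw [huval t, div_eq_iff hsqrt2.ne']
    linear_combination ((Real.sqrt 2 ^ 2 + 2) * g (φ t) ^ 3 - g (φ t) * μ) * hs2 +
      (-(c * g (φ t))) * hC2 + (2 * g (φ t)) * h2G + (-(g (φ t))) * hcb
  · -- |u 0| < δ
    have h0 : u 0 = a := by
      rw [hu_def]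
      simp only [hφ0, Real.sin_pi_div_two, one_pow, mul_one]
      rw [show b2 - c = a ^ 2 from hbc]
      exact Real.sqrt_sq ha.le
    rw [h0, abs_of_pos ha]
    exact haδ
  · -- deriv u 0 = 0
    rw [hderiv_u, hdu_def]
    simp [hφ0]
  · -- escape beyond √μ ≥ √μ/2
    refine ⟨G π, ?_, ?_⟩
    · have h1 : G (π / 2) < G π := hGmono (by linarith [Real.pi_pos])
      have h0 : G (π / 2) = 0 := by rw [hGval]; exact intervalIntegral.integral_same
      linarith
    · have hφπ : φ (G π) = π := hφG π
      have huπ : u (G π) = Real.sqrt b2 := by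
        rw [hu_def]
        simp [hφπ]
      rw [huπ, abs_of_nonneg (Real.sqrt_nonneg _)]
      have h1 : Real.sqrt μ ≤ Real.sqrt b2 := Real.sqrt_le_sqrt (by nlinarith)
      have h2 : (0:ℝ) ≤ Real.sqrt μ := Real.sqrt_nonneg _
      linarith
end

section
/- Let μ ∈ ℝ and (a, b) ∈ ℝ². There exists a twice differentiable function u : ℝ → ℝ, defined globally on all of ℝ, such that u''(t) = −u(t)·(u(t)² − μ) for all t ∈ ℝ, u(0) = a, and u'(0) = b. (Global existence for the reduced cubic Klein–Gordon ODE; local solutions cannot blow up because the conserved energy bounds u and u'.) -/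
open Set

noncomputable section KGaux

/-- clamp to `[-R, R]` -/
def KG.cl (R u : ℝ) : ℝ := max (-R) (min R u)

/-- truncated force -/
def KG.gg (μ R u : ℝ) : ℝ := -(KG.cl R u)^3 + μ * KG.cl R u

/-- first-order vector field -/
def KG.FF (μ R : ℝ) (p : ℝ × ℝ) : ℝ × ℝ := (p.2, KG.gg μ R p.1)

namespace KG

variable {μ R : ℝ}

lemma cl_abs_le (hR : 0 ≤ R) (u : ℝ) : |cl R u| ≤ R := by
  rw [abs_le, cl]
  constructor
  · exact le_max_left _ _
  · exact max_le (by linarith) (min_le_left _ _)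

lemma cl_eq (hu : |u| ≤ R) : cl R u = u := by
  rw [abs_le] at hu
  rw [cl, min_eq_right hu.2, max_eq_right hu.1]

lemma cl_lip (u v : ℝ) : |cl R u - cl R v| ≤ |u - v| := by
  have h1 : |cl R u - cl R v| ≤ max |(-R) - (-R)| |min R u - min R v| := by
    simpa [cl] using abs_max_sub_max_le_max (-R) (min R u) (-R) (min R v)
  have h2 : |min R u - min R v| ≤ max |R - R| |u - v| := abs_min_sub_min_le_max _ _ _ _
  simp only [sub_self, abs_zero] at h1 h2
  calc |cl R u - cl R v| ≤ max 0 |min R u - min R v| := h1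
    _ = |min R u - min R v| := max_eq_right (abs_nonneg _)
    _ ≤ max 0 |u - v| := h2
    _ = |u - v| := max_eq_right (abs_nonneg _)

lemma cl_continuous : Continuous (cl R) :=
  continuous_const.max (continuous_const.min continuous_id)

lemma gg_bound (hR : 0 ≤ R) (u : ℝ) : |gg μ R u| ≤ R^3 + |μ| * R := by
  have h := cl_abs_le hR u
  set c := cl R u with hc
  have h3 : |c^3| ≤ R^3 := by
    rw [abs_pow]; exact pow_le_pow_left₀ (abs_nonneg _) h 3
  calc |gg μ R u| ≤ |(-(c^3))| + |μ * c| := abs_add_le _ _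
    _ = |c^3| + |μ| * |c| := by rw [abs_neg, abs_mul]
    _ ≤ R^3 + |μ| * R := by gcongr

lemma gg_lip (hR : 0 ≤ R) (u v : ℝ) :
    |gg μ R u - gg μ R v| ≤ (3 * R^2 + |μ|) * |u - v| := by
  have hu := cl_abs_le hR u
  have hv := cl_abs_le hR v
  have hl := cl_lip (R := R) u v
  set p := cl R u
  set q := cl R v
  have key : gg μ R u - gg μ R v = (p - q) * (-(p^2 + p*q + q^2) + μ) := by
    rw [gg, gg]; ring
  rw [key, abs_mul]
  have h2 : |(-(p^2 + p*q + q^2) + μ)| ≤ 3 * R^2 + |μ| := by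
    have h1 : |(-(p^2 + p*q + q^2) + μ)| ≤ |p^2 + p*q + q^2| + |μ| := by
      calc |(-(p^2 + p*q + q^2) + μ)| ≤ |(-(p^2 + p*q + q^2))| + |μ| := abs_add_le _ _
        _ = |p^2 + p*q + q^2| + |μ| := by rw [abs_neg]
    have h3 : |p^2 + p*q + q^2| ≤ 3 * R^2 := by
      have hpq : |p*q| ≤ R^2 := by
        rw [abs_mul]
        calc |p| * |q| ≤ R * R := mul_le_mul hu hv (abs_nonneg _) hR
          _ = R^2 := (sq R).symm
      have hp2 : p^2 ≤ R^2 := by nlinarith [abs_nonneg p, abs_le.mp hu, neg_abs_le p, le_abs_self p]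
      have hq2 : q^2 ≤ R^2 := by nlinarith [abs_nonneg q, abs_le.mp hv]
      calc |p^2 + p*q + q^2| ≤ |p^2| + |p*q| + |q^2| := abs_add_three _ _ _
        _ = p^2 + |p*q| + q^2 := by rw [abs_of_nonneg (sq_nonneg p), abs_of_nonneg (sq_nonneg q)]
        _ ≤ 3 * R^2 := by linarith
    linarith
  calc |p - q| * |(-(p^2 + p*q + q^2) + μ)| ≤ |u - v| * (3 * R^2 + |μ|) := by
        apply mul_le_mul hl h2 (abs_nonneg _) (abs_nonneg _)
    _ = (3 * R^2 + |μ|) * |u - v| := mul_comm _ _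

lemma FF_lip (hR : 0 ≤ R) : LipschitzWith (Real.toNNReal (3 * R^2 + |μ| + 1)) (FF μ R) := by
  apply LipschitzWith.of_dist_le_mul
  intro p q
  rw [Real.coe_toNNReal _ (by positivity)]
  rw [FF, FF, Prod.dist_eq, Prod.dist_eq]
  simp only [Real.dist_eq]
  have h1 : |p.1 - q.1| ≤ max |p.1 - q.1| |p.2 - q.2| := le_max_left _ _
  have h2 : |p.2 - q.2| ≤ max |p.1 - q.1| |p.2 - q.2| := le_max_right _ _
  have hg := gg_lip (μ := μ) hR p.1 q.1
  have hnn : (0:ℝ) ≤ max |p.1 - q.1| |p.2 - q.2| := le_trans (abs_nonneg _) h1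
  apply max_le
  · nlinarith [sq_nonneg R, abs_nonneg μ]
  · calc |gg μ R p.1 - gg μ R q.1| ≤ (3 * R^2 + |μ|) * |p.1 - q.1| := hg
      _ ≤ (3 * R^2 + |μ| + 1) * max |p.1 - q.1| |p.2 - q.2| := by
          apply mul_le_mul (by linarith [sq_nonneg R, abs_nonneg μ]) h1 (abs_nonneg _)
          positivity

end KG
end KGaux

open Set
noncomputable section KGaux2

namespace KG
variable {μ R : ℝ}

lemma step (μ R : ℝ) (hR : 0 ≤ R) (T : ℝ) (p : ℝ × ℝ) :
    ∃ x : ℝ → ℝ × ℝ, x T = p ∧ ∀ t ∈ Icc T (T + 2⁻¹),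
      HasDerivWithinAt x (FF μ R (x t)) (Icc T (T + 2⁻¹)) t := by
  set Cg : ℝ := R^3 + |μ| * R + 1 with hCg
  have hCg0 : 0 < Cg := by positivity
  have hpl : IsPicardLindelof (fun _ : ℝ => FF μ R) (tmin := T) (tmax := T + 2⁻¹)
      ⟨T, by constructor <;> norm_num⟩ p (Real.toNNReal (‖p‖ + Cg)) 0
      (Real.toNNReal (2 * (‖p‖ + Cg))) (Real.toNNReal (3 * R^2 + |μ| + 1)) := by
    constructor
    · intro t _
      exact (FF_lip hR).lipschitzOnWith
    · intro x _
      exact continuousOn_const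
    · intro t _ x hx
      rw [Metric.mem_closedBall] at hx
      rw [Real.coe_toNNReal _ (by positivity)] at hx
      rw [Real.coe_toNNReal _ (by positivity)]
      have hxn : ‖x‖ ≤ ‖p‖ + (‖p‖ + Cg) := by
        calc ‖x‖ ≤ ‖p‖ + dist x p := by rw [dist_eq_norm]; exact norm_le_norm_add_norm_sub' x p
          _ ≤ ‖p‖ + (‖p‖ + Cg) := by linarith
      have h2 : ‖x.2‖ ≤ ‖x‖ := norm_snd_le x
      have hg : |gg μ R x.1| ≤ Cg := by
        have := gg_bound (μ := μ) hR x.1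
        linarith
      rw [FF, Prod.norm_def]
      apply max_le
      · simp only [Real.norm_eq_abs] at *
        have : (0:ℝ) ≤ ‖p‖ := norm_nonneg p
        linarith
      · simp only [Real.norm_eq_abs]
        have : (0:ℝ) ≤ ‖p‖ := norm_nonneg p
        linarith
    · have : max (T + 2⁻¹ - T) (T - T) = 2⁻¹ := by norm_num
      rw [this]
      rw [Real.coe_toNNReal _ (by positivity), Real.coe_toNNReal _ (by positivity)]
      simp only [NNReal.coe_zero, sub_zero]
      ring_nf
      linarith [norm_nonneg p]
  exact hpl.exists_eq_forall_mem_Icc_hasDerivWithinAt₀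

end KG
end KGaux2
namespace KG
open Set

lemma glue {F : ℝ × ℝ → ℝ × ℝ} {x y : ℝ → ℝ × ℝ} {A B C : ℝ}
    (hAB : A ≤ B) (hBC : B ≤ C)
    (hx : ∀ t ∈ Icc A B, HasDerivWithinAt x (F (x t)) (Icc A B) t)
    (hy : ∀ t ∈ Icc B C, HasDerivWithinAt y (F (y t)) (Icc B C) t)
    (hxy : x B = y B) :
    ∀ t ∈ Icc A C, HasDerivWithinAt (fun s => if s ≤ B then x s else y s)
      (F ((fun s => if s ≤ B then x s else y s) t)) (Icc A C) t := by
  set z : ℝ → ℝ × ℝ := fun s => if s ≤ B then x s else y s with hz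
  have hzx : EqOn z x (Icc A B) := fun s hs => by simp [hz, hs.2]
  have hzy : EqOn z y (Icc B C) := by
    intro s hs
    rcases eq_or_lt_of_le hs.1 with h | h
    · simp [hz, ← h, hxy]
    · simp [hz, not_le.mpr h]
  intro t ht
  rcases lt_trichotomy t B with hlt | heq | hgt
  · have htAB : t ∈ Icc A B := ⟨ht.1, hlt.le⟩
    have h1 : HasDerivWithinAt z (F (z t)) (Icc A B) t := by
      rw [hzx htAB]
      exact (hx t htAB).congr hzx (hzx htAB)
    apply h1.mono_of_mem_nhdsWithin
    have : Icc A C ∩ Iio B ⊆ Icc A B := fun s hs => ⟨hs.1.1, hs.2.le⟩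
    exact Filter.mem_of_superset
      (inter_mem_nhdsWithin _ (Iio_mem_nhds hlt)) this
  · subst heq
    have htAB : t ∈ Icc A t := ⟨ht.1, le_refl t⟩
    have htBC : t ∈ Icc t C := ⟨le_refl t, ht.2⟩
    have h1 : HasDerivWithinAt z (F (z t)) (Icc A t) t := by
      rw [hzx htAB]
      exact (hx t htAB).congr hzx (hzx htAB)
    have h2 : HasDerivWithinAt z (F (z t)) (Icc t C) t := by
      rw [hzx htAB, hxy]
      exact (hy t htBC).congr hzy (hzy htBC)
    have := h1.union h2
    rwa [Icc_union_Icc_eq_Icc hAB hBC] at this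
  · have htBC : t ∈ Icc B C := ⟨hgt.le, ht.2⟩
    have h1 : HasDerivWithinAt z (F (z t)) (Icc B C) t := by
      rw [hzy htBC]
      exact (hy t htBC).congr hzy (hzy htBC)
    apply h1.mono_of_mem_nhdsWithin
    have : Icc A C ∩ Ioi B ⊆ Icc B C := fun s hs => ⟨hs.2.le, hs.1.2⟩
    exact Filter.mem_of_superset
      (inter_mem_nhdsWithin _ (Ioi_mem_nhds hgt)) this

lemma forward (μ R : ℝ) (hR : 0 ≤ R) (p : ℝ × ℝ) (n : ℕ) :
    ∃ x : ℝ → ℝ × ℝ, x 0 = p ∧ ∀ t ∈ Icc (0:ℝ) (n * 2⁻¹),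
      HasDerivWithinAt x (FF μ R (x t)) (Icc (0:ℝ) (n * 2⁻¹)) t := by
  induction n with
  | zero =>
    obtain ⟨x, hx0, hx⟩ := step μ R hR 0 p
    refine ⟨x, hx0, ?_⟩
    intro t ht
    simp only [Nat.cast_zero, zero_mul] at ht ⊢
    have ht0 : t = 0 := by rw [Icc_self, mem_singleton_iff] at ht; exact ht
    subst ht0
    have hmem : (0:ℝ) ∈ Icc (0:ℝ) (0 + 2⁻¹) := by constructor <;> norm_num
    refine (hx 0 hmem).mono ?_
    intro s hs
    rw [Icc_self, mem_singleton_iff] at hs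
    subst hs
    exact hmem
  | succ n ih =>
    obtain ⟨x, hx0, hx⟩ := ih
    obtain ⟨y, hy0, hy⟩ := step μ R hR (n * 2⁻¹) (x (n * 2⁻¹))
    have hn0 : (0:ℝ) ≤ n * 2⁻¹ := by positivity
    have hcast : ((n+1 : ℕ) : ℝ) * 2⁻¹ = n * 2⁻¹ + 2⁻¹ := by push_cast; ring
    refine ⟨fun s => if s ≤ n * 2⁻¹ then x s else y s, by simp [hn0, hx0], ?_⟩
    rw [hcast]
    exact glue hn0 (by linarith) hx hy hy0.symm
end KG
namespace KG
open Set

lemma toIci {x : ℝ → ℝ × ℝ} {d : ℝ × ℝ} {T t : ℝ} (ht : t ∈ Ico 0 T)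
    (h : HasDerivWithinAt x d (Icc 0 T) t) : HasDerivWithinAt x d (Ici t) t := by
  apply h.mono_of_mem_nhdsWithin
  refine Filter.mem_of_superset (inter_mem_nhdsWithin _ (Iio_mem_nhds ht.2)) ?_
  intro s hs
  exact ⟨le_trans ht.1 hs.1, hs.2.le⟩

lemma sol_eq {μ R : ℝ} (hR : 0 ≤ R) {T1 T2 : ℝ} (hT : T1 ≤ T2)
    {x1 x2 : ℝ → ℝ × ℝ}
    (h1 : ∀ t ∈ Icc (0:ℝ) T1, HasDerivWithinAt x1 (FF μ R (x1 t)) (Icc (0:ℝ) T1) t)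
    (h2 : ∀ t ∈ Icc (0:ℝ) T2, HasDerivWithinAt x2 (FF μ R (x2 t)) (Icc (0:ℝ) T2) t)
    (h0 : x1 0 = x2 0) : EqOn x1 x2 (Icc (0:ℝ) T1) := by
  apply ODE_solution_unique (v := fun _ q => FF μ R q)
    (K := Real.toNNReal (3 * R^2 + |μ| + 1))
  · intro _
    exact FF_lip hR
  · exact fun t ht => (h1 t ht).continuousWithinAt
  · intro t ht
    exact toIci ht (h1 t ⟨ht.1, ht.2.le⟩)
  · intro t ht
    exact ((h2 t ⟨ht.1, ht.2.trans hT⟩).continuousWithinAt).mono (Icc_subset_Icc_right hT)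
  · intro t ht
    have ht2 : t ∈ Icc (0:ℝ) T2 := ⟨ht.1, le_trans ht.2.le hT⟩
    apply (h2 t ht2).mono_of_mem_nhdsWithin
    refine Filter.mem_of_superset (inter_mem_nhdsWithin _ (Iio_mem_nhds ht.2)) ?_
    intro s hs
    exact ⟨le_trans ht.1 hs.1, le_trans hs.2.le hT⟩
  · exact h0

/-- global forward solution -/
lemma forward_global (μ R : ℝ) (hR : 0 ≤ R) (p : ℝ × ℝ) :
    ∃ Y : ℝ → ℝ × ℝ, Y 0 = p ∧
      (∀ t : ℝ, 0 < t → HasDerivAt Y (FF μ R (Y t)) t) ∧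
      HasDerivWithinAt Y (FF μ R (Y 0)) (Ici (0:ℝ)) 0 := by
  have hex := forward μ R hR p
  set X : ℕ → ℝ → ℝ × ℝ := fun n => Classical.choose (hex n) with hX
  have hX0 : ∀ n, X n 0 = p := fun n => (Classical.choose_spec (hex n)).1
  have hXd : ∀ n : ℕ, ∀ t ∈ Icc (0:ℝ) ((n:ℝ) * 2⁻¹),
      HasDerivWithinAt (X n) (FF μ R (X n t)) (Icc (0:ℝ) ((n:ℝ) * 2⁻¹)) t :=
    fun n => (Classical.choose_spec (hex n)).2
  have hagree : ∀ m n : ℕ, ∀ t : ℝ, 0 ≤ t → t ≤ m * 2⁻¹ → t ≤ n * 2⁻¹ →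
      X m t = X n t := by
    intro m n t ht0 htm htn
    rcases le_total m n with h | h
    · have : (m:ℝ) * 2⁻¹ ≤ n * 2⁻¹ := by
        have : (m:ℝ) ≤ n := Nat.cast_le.mpr h
        linarith
      exact sol_eq hR this (hXd m) (hXd n) ((hX0 m).trans (hX0 n).symm) ⟨ht0, htm⟩
    · have : (n:ℝ) * 2⁻¹ ≤ m * 2⁻¹ := by
        have : (n:ℝ) ≤ m := Nat.cast_le.mpr h
        linarith
      exact (sol_eq hR this (hXd n) (hXd m) ((hX0 n).trans (hX0 m).symm) ⟨ht0, htn⟩).symm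
  set Y : ℝ → ℝ × ℝ := fun t => X (⌊2*t⌋₊ + 2) t with hY
  have hYle : ∀ t : ℝ, 0 ≤ t → t < ((⌊2*t⌋₊ + 2 : ℕ) : ℝ) * 2⁻¹ := by
    intro t ht
    have := Nat.lt_floor_add_one (2*t)
    push_cast
    linarith
  have hYeq : ∀ n : ℕ, ∀ t : ℝ, 0 ≤ t → t ≤ n * 2⁻¹ → Y t = X n t := by
    intro n t ht0 htn
    exact hagree _ n t ht0 (hYle t ht0).le htn
  have hY0 : Y 0 = p := by
    rw [hY]
    simp only
    rw [hX0]
  refine ⟨Y, hY0, ?_, ?_⟩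
  · intro t ht
    set n : ℕ := ⌊2*t⌋₊ + 2 with hn
    have htn : t < (n:ℝ) * 2⁻¹ := hYle t ht.le
    have hIcc : Icc (0:ℝ) ((n:ℝ) * 2⁻¹) ∈ nhds t := Icc_mem_nhds ht htn
    have hXt : HasDerivAt (X n) (FF μ R (X n t)) t :=
      (hXd n t ⟨ht.le, htn.le⟩).hasDerivAt hIcc
    have heq : Y =ᶠ[nhds t] X n := by
      filter_upwards [hIcc] with s hs
      exact hYeq n s hs.1 hs.2
    have : Y t = X n t := hYeq n t ht.le htn.le
    rw [this]
    exact hXt.congr_of_eventuallyEq heq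
  · set n : ℕ := 2 with hn
    have htn : (0:ℝ) < (n:ℝ) * 2⁻¹ := by norm_num
    have hXt : HasDerivWithinAt (X n) (FF μ R (X n 0)) (Ici (0:ℝ)) 0 :=
      toIci ⟨le_refl 0, htn⟩ (hXd n 0 ⟨le_refl 0, htn.le⟩)
    have heq : EqOn Y (X n) (Icc (0:ℝ) ((n:ℝ) * 2⁻¹)) := fun s hs => hYeq n s hs.1 hs.2
    have hY0' : Y 0 = X n 0 := hYeq n 0 le_rfl htn.le
    have h1 : HasDerivWithinAt Y (FF μ R (X n 0)) (Icc (0:ℝ) ((n:ℝ) * 2⁻¹)) 0 :=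
      (hXd n 0 ⟨le_rfl, htn.le⟩).congr (fun s hs => heq hs) hY0'
    rw [hY0']
    apply h1.mono_of_mem_nhdsWithin
    refine Filter.mem_of_superset (inter_mem_nhdsWithin _ (Iio_mem_nhds htn)) ?_
    intro s hs
    exact ⟨hs.1, hs.2.le⟩
end KG
namespace KG
open Set

/-- reflection map -/
noncomputable def RM : ℝ × ℝ →L[ℝ] ℝ × ℝ :=
  (ContinuousLinearMap.fst ℝ ℝ ℝ).prod (-(ContinuousLinearMap.snd ℝ ℝ ℝ))

lemma RM_apply (w : ℝ × ℝ) : RM w = (w.1, -w.2) := rfl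

lemma RM_neg_FF (μ R : ℝ) (w : ℝ × ℝ) : RM (-(FF μ R w)) = FF μ R (RM w) := by
  simp [RM_apply, FF]

lemma global (μ R : ℝ) (hR : 0 ≤ R) (p : ℝ × ℝ) :
    ∃ W : ℝ → ℝ × ℝ, W 0 = p ∧ ∀ t : ℝ, HasDerivAt W (FF μ R (W t)) t := by
  obtain ⟨Yp, hYp0, hYpd, hYpd0⟩ := forward_global μ R hR p
  obtain ⟨Ym, hYm0, hYmd, hYmd0⟩ := forward_global μ R hR (RM p)
  set Z : ℝ → ℝ × ℝ := fun t => RM (Ym (-t)) with hZ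
  have hZ0 : Z 0 = p := by
    rw [hZ]
    simp only [neg_zero]
    rw [hYm0, RM_apply, RM_apply]
    simp
  have hq : ∀ t : ℝ, t < 0 → HasDerivAt (fun s => Ym (-s)) (-(FF μ R (Ym (-t)))) t := by
    intro t ht
    have h1 : HasDerivAt Ym (FF μ R (Ym (-t))) (-t) := hYmd (-t) (by linarith)
    have h2 : HasDerivAt (fun s : ℝ => -s) (-1 : ℝ) t := (hasDerivAt_id t).neg
    have := h1.scomp t h2
    rw [neg_one_smul] at this
    exact this
  have hZd : ∀ t : ℝ, t < 0 → HasDerivAt Z (FF μ R (Z t)) t := by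
    intro t ht
    have := RM.hasFDerivAt.comp_hasDerivAt t (hq t ht)
    rwa [RM_neg_FF] at this
  have hZd0 : HasDerivWithinAt Z (FF μ R (Z 0)) (Iic (0:ℝ)) 0 := by
    have h2 : HasDerivWithinAt (fun s : ℝ => -s) (-1 : ℝ) (Iic 0) 0 :=
      ((hasDerivAt_id (0:ℝ)).neg).hasDerivWithinAt
    have h1 : HasDerivWithinAt Ym (FF μ R (Ym 0)) (Ici (0:ℝ)) (-(0:ℝ)) := by
      rw [neg_zero]; exact hYmd0
    have hmaps : MapsTo (fun s : ℝ => -s) (Iic (0:ℝ)) (Ici (0:ℝ)) := fun s hs => by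
      simp only [mem_Ici]; simp only [mem_Iic] at hs; linarith
    have hcomp := h1.scomp 0 h2 hmaps
    have hcomp2 := RM.hasFDerivAt.comp_hasDerivWithinAt 0 hcomp
    have : RM ((-1 : ℝ) • FF μ R (Ym 0)) = FF μ R (Z 0) := by
      rw [neg_one_smul, RM_neg_FF]
      rw [hZ]; simp only [neg_zero]
    rwa [this] at hcomp2
  set W : ℝ → ℝ × ℝ := fun t => if 0 ≤ t then Yp t else Z t with hW
  have hWY : ∀ s : ℝ, 0 ≤ s → W s = Yp s := fun s hs => by simp [hW, hs]
  have hWZ : ∀ s : ℝ, s ≤ 0 → W s = Z s := by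
    intro s hs
    rcases eq_or_lt_of_le hs with h | h
    · rw [hW]; simp only [h, le_refl, if_pos, hZ0]; rw [← h] at hYp0 ⊢; simp [hYp0, hZ0]
    · rw [hW]; simp [not_le.mpr h]
  have hW0 : W 0 = p := by rw [hWY 0 le_rfl, hYp0]
  refine ⟨W, hW0, ?_⟩
  intro t
  rcases lt_trichotomy t 0 with ht | ht | ht
  · have heq : W =ᶠ[nhds t] Z := by
      filter_upwards [Iio_mem_nhds ht] with s hs
      exact hWZ s (le_of_lt hs)
    rw [hWZ t ht.le]
    exact (hZd t ht).congr_of_eventuallyEq heq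
  · subst ht
    have h1 : HasDerivWithinAt W (FF μ R (W 0)) (Ici (0:ℝ)) 0 := by
      rw [hWY 0 le_rfl]
      exact hYpd0.congr (fun s hs => hWY s hs) (hWY 0 le_rfl)
    have h2 : HasDerivWithinAt W (FF μ R (W 0)) (Iic (0:ℝ)) 0 := by
      have : FF μ R (W 0) = FF μ R (Z 0) := by rw [hW0, hZ0]
      rw [this]
      exact hZd0.congr (fun s hs => hWZ s hs) (hWZ 0 le_rfl)
    have := h2.union h1
    rwa [Iic_union_Ici, hasDerivWithinAt_univ] at this
  · have heq : W =ᶠ[nhds t] Yp := by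
      filter_upwards [Ioi_mem_nhds ht] with s hs
      exact hWY s (le_of_lt hs)
    rw [hWY t ht.le]
    exact (hYpd t ht).congr_of_eventuallyEq heq
end KG
namespace KG
open Set intervalIntegral

/-- the integrand of the potential -/
noncomputable def hh (μ R s : ℝ) : ℝ := (cl R s)^3 - μ * cl R s

/-- the potential -/
noncomputable def VV (μ R w : ℝ) : ℝ := ∫ s in (0:ℝ)..w, hh μ R s

variable {μ R : ℝ}

lemma hh_continuous : Continuous (hh μ R) := by
  apply Continuous.sub
  · exact (cl_continuous).pow 3
  · exact continuous_const.mul cl_continuous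

lemma hh_neg_gg (u : ℝ) : hh μ R u = -(gg μ R u) := by
  rw [hh, gg]; ring

lemma VV_hasDerivAt (w : ℝ) : HasDerivAt (VV μ R) (hh μ R w) w :=
  ((hh_continuous).integral_hasStrictDerivAt 0 w).hasDerivAt

lemma VV_eval (hR : 0 ≤ R) {w : ℝ} (hw : |w| ≤ R) :
    VV μ R w = w^4/4 - μ * w^2/2 := by
  have hcongr : EqOn (hh μ R) (fun s => s^3 - μ * s) (uIcc 0 w) := by
    intro s hs
    have hs' : |s| ≤ R := by
      rw [uIcc] at hs
      have h1 : min 0 w ≤ s := hs.1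
      have h2 : s ≤ max 0 w := hs.2
      rw [abs_le]
      rw [abs_le] at hw
      constructor
      · calc -R ≤ min 0 w := le_min (by linarith) hw.1
          _ ≤ s := h1
      · calc s ≤ max 0 w := h2
          _ ≤ R := max_le hR hw.2
    rw [hh, cl_eq hs']
  rw [VV, integral_congr hcongr]
  have hi1 : IntervalIntegrable (fun s : ℝ => s^3) MeasureTheory.volume 0 w :=
    (continuous_pow 3).intervalIntegrable _ _
  have hi2 : IntervalIntegrable (fun s : ℝ => μ * s) MeasureTheory.volume 0 w :=
    (continuous_const.mul continuous_id).intervalIntegrable _ _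
  rw [integral_sub hi1 hi2, integral_pow, integral_const_mul, integral_id]
  norm_num
  ring

lemma VV_up (hR : 0 ≤ R) {w : ℝ} (hw : R ≤ w) :
    VV μ R w = VV μ R R + (R^3 - μ * R) * (w - R) := by
  have hi1 : IntervalIntegrable (hh μ R) MeasureTheory.volume 0 R :=
    hh_continuous.intervalIntegrable _ _
  have hi2 : IntervalIntegrable (hh μ R) MeasureTheory.volume R w :=
    hh_continuous.intervalIntegrable _ _
  have hadd := integral_add_adjacent_intervals hi1 hi2
  have hcongr : EqOn (hh μ R) (fun _ => R^3 - μ * R) (uIcc R w) := by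
    intro s hs
    rw [uIcc_of_le hw] at hs
    have hcl : cl R s = R := by
      rw [cl, min_eq_left hs.1, max_eq_right (by linarith)]
    rw [hh, hcl]
  have : ∫ s in R..w, hh μ R s = (R^3 - μ * R) * (w - R) := by
    rw [integral_congr hcongr, integral_const, smul_eq_mul]
    ring
  rw [VV, VV, ← hadd, this]

lemma VV_down (hR : 0 ≤ R) {w : ℝ} (hw : w ≤ -R) :
    VV μ R w = VV μ R (-R) + (R^3 - μ * R) * (-R - w) := by
  have hi1 : IntervalIntegrable (hh μ R) MeasureTheory.volume 0 (-R) :=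
    hh_continuous.intervalIntegrable _ _
  have hi2 : IntervalIntegrable (hh μ R) MeasureTheory.volume (-R) w :=
    hh_continuous.intervalIntegrable _ _
  have hadd := integral_add_adjacent_intervals hi1 hi2
  have hcongr : EqOn (hh μ R) (fun _ => -(R^3 - μ * R)) (uIcc (-R) w) := by
    intro s hs
    rw [uIcc_of_ge hw] at hs
    have h2 : s ≤ -R := hs.2
    have hcl : cl R s = -R := by
      rw [cl, min_eq_right (by linarith), max_eq_left h2]
    rw [hh, hcl]
    ring
  have : ∫ s in (-R)..w, hh μ R s = (R^3 - μ * R) * (-R - w) := by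
    rw [integral_congr hcongr, integral_const, smul_eq_mul]
    ring
  rw [VV, VV, ← hadd, this]

end KG

set_option maxHeartbeats 1000000

/-- Global existence for the reduced cubic Klein–Gordon ODE: for any `μ ∈ ℝ` and
initial data `(a, b)`, there is a globally defined twice differentiable function
`u : ℝ → ℝ` with `u'' = −u(u² − μ)`, `u(0) = a`, `u'(0) = b`. -/
theorem stmt_15 (μ a b : ℝ) :
    ∃ u : ℝ → ℝ,
      Differentiable ℝ u ∧ Differentiable ℝ (deriv u) ∧
      (∀ t : ℝ, deriv (deriv u) t = -u t * (u t ^ 2 - μ)) ∧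
      u 0 = a ∧ deriv u 0 = b := by
  have habsa := abs_nonneg a
  have habsmu := abs_nonneg μ
  obtain ⟨e, he0, heE⟩ : ∃ e : ℝ, 0 ≤ e ∧ b^2/2 + a^4/4 - μ * a^2/2 ≤ e :=
    ⟨b^2/2 + a^4/4 + |μ| * a^2/2, by positivity, by nlinarith [neg_abs_le μ, sq_nonneg a]⟩
  obtain ⟨R, hR1, haR, hRe⟩ : ∃ R : ℝ, 1 ≤ R ∧ |a| ≤ R ∧ 1 + 4*e ≤ R - 2*|μ| :=
    ⟨1 + |a| + 2*|μ| + 4*e, by linarith, by linarith, by linarith⟩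
  have hR0 : (0:ℝ) ≤ R := by linarith
  have hRsq : R ≤ R^2 := by nlinarith
  obtain ⟨W, hW0, hWd⟩ := KG.global μ R hR0 (a, b)
  set u : ℝ → ℝ := fun t => (W t).1 with hu_def
  set v : ℝ → ℝ := fun t => (W t).2 with hv_def
  have hu : ∀ t, HasDerivAt u (v t) t := by
    intro t
    exact (ContinuousLinearMap.fst ℝ ℝ ℝ).hasFDerivAt.comp_hasDerivAt t (hWd t)
  have hv : ∀ t, HasDerivAt v (KG.gg μ R (u t)) t := by
    intro t
    exact (ContinuousLinearMap.snd ℝ ℝ ℝ).hasFDerivAt.comp_hasDerivAt t (hWd t)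
  set E : ℝ → ℝ := fun t => (1/2) * (v t)^2 + KG.VV μ R (u t) with hE_def
  have hE : ∀ t, HasDerivAt E 0 t := by
    intro t
    have h1 : HasDerivAt (fun s => (1/2) * (v s)^2)
        ((1/2) * ((2:ℕ) * v t ^ 1 * KG.gg μ R (u t))) t := ((hv t).pow 2).const_mul _
    have h2 : HasDerivAt (fun s => KG.VV μ R (u s)) (KG.hh μ R (u t) * v t) t :=
      (KG.VV_hasDerivAt (u t)).comp t (hu t)
    have hsum := h1.add h2
    refine hsum.congr_deriv ?_
    rw [KG.hh_neg_gg]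
    push_cast
    ring
  have hEconst : ∀ t, E t = E 0 :=
    fun t => is_const_of_deriv_eq_zero (fun s => (hE s).differentiableAt)
      (fun s => (hE s).deriv) t 0
  have hu0 : u 0 = a := by rw [hu_def]; simp only; rw [hW0]
  have hv0 : v 0 = b := by rw [hv_def]; simp only; rw [hW0]
  have hE0 : E 0 ≤ e := by
    have hEt : E 0 = 1/2 * v 0^2 + KG.VV μ R (u 0) := rfl
    rw [hEt, hu0, hv0, KG.VV_eval hR0 haR]
    linarith [heE]
  have hVReval : KG.VV μ R R = R^4/4 - μ * R^2/2 :=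
    KG.VV_eval hR0 (by rw [abs_of_nonneg hR0])
  have hVRbig : e < KG.VV μ R R := by
    rw [hVReval]
    have h2 : 1 + 4*e ≤ R^2 - 2*|μ| := by nlinarith [hRe, hRsq]
    have h4 : 1*(1+4*e) ≤ R^2*(R^2-2*|μ|) := by nlinarith [he0, hR1, hRsq]
    nlinarith [mul_nonneg (sub_nonneg.mpr (le_abs_self μ)) (sq_nonneg R), h4]
  have hKpos : 0 ≤ R^3 - μ * R := by nlinarith [le_abs_self μ, he0, hRsq, hRe]
  have habs : ∀ t, |u t| ≤ R := by
    intro t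
    by_contra hcon
    push_neg at hcon
    have hVle : KG.VV μ R (u t) ≤ e := by
      have hEt : E t = 1/2 * v t^2 + KG.VV μ R (u t) := rfl
      have h5 : KG.VV μ R (u t) ≤ E t := by
        rw [hEt]
        linarith [sq_nonneg (v t)]
      rw [hEconst t] at h5
      linarith
    rcases lt_abs.mp hcon with h | h
    · rw [KG.VV_up hR0 h.le] at hVle
      nlinarith [hKpos, hVRbig]
    · have h' : u t ≤ -R := by linarith
      rw [KG.VV_down hR0 h'] at hVle
      have hflip : KG.VV μ R (-R) = KG.VV μ R R := by
        rw [KG.VV_eval hR0 (by rw [abs_neg, abs_of_nonneg hR0]), hVReval]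
        ring
      rw [hflip] at hVle
      nlinarith [hKpos, hVRbig]
  have hgg : ∀ t, KG.gg μ R (u t) = -u t * (u t ^ 2 - μ) := by
    intro t
    rw [KG.gg, KG.cl_eq (habs t)]
    ring
  have hderivu : deriv u = v := funext fun t => (hu t).deriv
  refine ⟨u, fun t => (hu t).differentiableAt, ?_, ?_, hu0, ?_⟩
  · rw [hderivu]
    exact fun t => (hv t).differentiableAt
  · intro t
    rw [hderivu, (hv t).deriv, hgg t]
  · rw [hderivu, hv0]
end

section
/- Let μ > 0 and let u : ℝ → ℝ be twice differentiable with u''(t) = −u(t)·(u(t)² − μ), u(0) = A + √μ with A ≥ 0, and u'(0) = 0. If A = (√2 − 1)·√μ exactly (the boundary value A' = 1), then the conserved energy equals 0 and u(t)² ≤ 2μ for all t ∈ ℝ; moreover at any time t with u(t) = 0 one also has u'(t) = 0. -/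
/-!
The energy `½ u'² + V(u)` with `V(v) = v⁴/4 − μ v²/2` is conserved along solutions. At `A' = 1`
the initial value is `√(2μ)`, a zero of `V`, and `u'(0) = 0`, so the energy vanishes. Since
`V(v) = v²(v² − 2μ)/4`, zero energy forces `V(u) = −½ u'² ≤ 0`, i.e. `u² ≤ 2μ`, and at a zero of
`u` it leaves `½ u'² = 0`.
-/

open Real

theorem energy_eq_of_deriv_deriv_eq_neg {u V V' : ℝ → ℝ} (hu : Differentiable ℝ u)
    (hu' : Differentiable ℝ (deriv u)) (hV : ∀ x, HasDerivAt V (V' x) x)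
    (hode : ∀ t, deriv (deriv u) t = -V' (u t)) (t s : ℝ) :
    1 / 2 * deriv u t ^ 2 + V (u t) = 1 / 2 * deriv u s ^ 2 + V (u s) := by
  set E : ℝ → ℝ := fun t => 1 / 2 * deriv u t ^ 2 + V (u t)
  have hE : ∀ t, HasDerivAt E 0 t := fun t => by
    refine ((((hu' t).hasDerivAt.pow 2).const_mul (1 / 2)).add
      ((hV (u t)).comp t (hu t).hasDerivAt)).congr_deriv ?_
    rw [hode t]
    ring
  exact is_const_of_deriv_eq_zero (fun t => (hE t).differentiableAt)
    (fun t => (hE t).deriv) t s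

noncomputable def kleinGordonPotential (μ v : ℝ) : ℝ := 1 / 4 * v ^ 4 - μ / 2 * v ^ 2

theorem hasDerivAt_kleinGordonPotential (μ v : ℝ) :
    HasDerivAt (kleinGordonPotential μ) (v * (v ^ 2 - μ)) v := by
  refine (((hasDerivAt_pow 4 v).const_mul (1 / 4)).sub
    ((hasDerivAt_pow 2 v).const_mul (μ / 2))).congr_deriv ?_
  push_cast
  ring

theorem kleinGordonPotential_eq_zero_of_sq_eq {μ v : ℝ} (hv : v ^ 2 = 2 * μ) :
    kleinGordonPotential μ v = 0 := by
  have : v ^ 4 = (v ^ 2) ^ 2 := by ring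
  simp only [kleinGordonPotential, this, hv]
  ring

theorem sq_le_of_half_sq_add_kleinGordonPotential_eq_zero {μ p v : ℝ} (hμ : 0 ≤ μ)
    (h : 1 / 2 * p ^ 2 + kleinGordonPotential μ v = 0) : v ^ 2 ≤ 2 * μ := by
  unfold kleinGordonPotential at h
  nlinarith [sq_nonneg p, sq_nonneg v, sq_nonneg (v ^ 2 - 2 * μ)]

theorem stmt_17_general (μ A : ℝ) (hμ : 0 < μ)
    (hAeq : A = (Real.sqrt 2 - 1) * Real.sqrt μ) (u : ℝ → ℝ)
    (hu : Differentiable ℝ u) (hu' : Differentiable ℝ (deriv u))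
    (hode : ∀ t : ℝ, deriv (deriv u) t = -u t * (u t ^ 2 - μ))
    (h0 : u 0 = A + Real.sqrt μ) (h0' : deriv u 0 = 0) :
    (∀ t : ℝ,
      (1 / 2) * (deriv u t) ^ 2 + (1 / 4) * (u t) ^ 4 - (μ / 2) * (u t) ^ 2 = 0) ∧
    (∀ t : ℝ, (u t) ^ 2 ≤ 2 * μ) ∧
    (∀ t : ℝ, u t = 0 → deriv u t = 0) := by
  have hu0 : u 0 ^ 2 = 2 * μ := by
    rw [h0, hAeq, show (√2 - 1) * √μ + √μ = √2 * √μ by ring, mul_pow,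
      sq_sqrt zero_le_two, sq_sqrt hμ.le]
  have henergy : ∀ t, 1 / 2 * deriv u t ^ 2 + kleinGordonPotential μ (u t) = 0 := fun t => by
    rw [energy_eq_of_deriv_deriv_eq_neg hu hu' (hasDerivAt_kleinGordonPotential μ)
      (fun t => by rw [hode t]; ring) t 0, h0', kleinGordonPotential_eq_zero_of_sq_eq hu0]
    norm_num
  refine ⟨fun t => by simpa only [kleinGordonPotential, add_sub_assoc] using henergy t,
    fun t => sq_le_of_half_sq_add_kleinGordonPotential_eq_zero hμ.le (henergy t),
    fun t ht => by simpa [kleinGordonPotential, ht] using henergy t⟩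

/-- The boundary case `A' = 1`: if `μ > 0`, `A = (√2 − 1)·√μ`, and
`u'' = −u(u² − μ)` with `u(0) = A + √μ`, `u'(0) = 0`, then the conserved energy
vanishes identically, `u(t)² ≤ 2μ` for all `t`, and at any time where `u`
vanishes its derivative vanishes as well. -/
theorem stmt_17 (μ A : ℝ) (hμ : 0 < μ) (hA : 0 ≤ A)
    (hAeq : A = (Real.sqrt 2 - 1) * Real.sqrt μ) (u : ℝ → ℝ)
    (hu : Differentiable ℝ u) (hu' : Differentiable ℝ (deriv u))
    (hode : ∀ t : ℝ, deriv (deriv u) t = -u t * (u t ^ 2 - μ))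
    (h0 : u 0 = A + Real.sqrt μ) (h0' : deriv u 0 = 0) :
    (∀ t : ℝ,
      (1 / 2) * (deriv u t) ^ 2 + (1 / 4) * (u t) ^ 4 - (μ / 2) * (u t) ^ 2 = 0) ∧
    (∀ t : ℝ, (u t) ^ 2 ≤ 2 * μ) ∧
    (∀ t : ℝ, u t = 0 → deriv u t = 0) :=
  stmt_17_general μ A hμ hAeq u hu hu' hode h0 h0'
end
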